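/- arXiv:2010.15910 — 3 statements merged into one kernel-verified Lean document; each statement's English description precedes it below -/
import Mathlib

section
/- Let u : ℝ^d → ℝ be bounded, let x* ∈ ℝ^d and C > 0, and suppose sup_{B₁(x*)}|u| ≤ 4C. If sup_{B_{2^{-j}}(x*)}|u| ≤ C·2^{-2j} for every j ∈ M(x*,u), then sup_{B_{2^{-j}}(x*)}|u| ≤ 4C·2^{-2j} for every j ∈ ℕ. -/
open Metric MeasureTheory Set Filter
open scoped Topology RealInnerProductSpace ENNReal NNReal

noncomputable section

abbrev E (d : ℕ) := EuclideanSpace ℝ (Fin d)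
abbrev Mat (d : ℕ) := Matrix (Fin d) (Fin d) ℝ

/-- Operator norm of a matrix, viewed as a linear operator on Euclidean space. -/
def matOpNorm {d : ℕ} (N : Mat d) : ℝ :=
  ‖LinearMap.toContinuousLinearMap (Matrix.toEuclideanLin N)‖

/-- `(λ,Λ)`-uniform ellipticity of an operator on symmetric matrices. -/
def UniformlyElliptic {d : ℕ} (lam Lam : ℝ) (F : Mat d → ℝ) : Prop :=
  F 0 = 0 ∧
  ∀ M N : Mat d, M.IsSymm → N.IsSymm → N.PosSemidef →
    lam * matOpNorm N ≤ F (M + N) - F M ∧ F (M + N) - F M ≤ Lam * matOpNorm N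

/-- Positive homogeneity of degree one. -/
def PosHomOne {d : ℕ} (F : Mat d → ℝ) : Prop :=
  ∀ τ : ℝ, 0 ≤ τ → ∀ M : Mat d, F (τ • M) = τ * F M

/-- Pucci maximal operator `M⁺_{λ,Λ}`. -/
def pucciPlus {d : ℕ} (lam Lam : ℝ) (M : Mat d) : ℝ :=
  if h : M.IsHermitian then
    ∑ i, (Lam * max (h.eigenvalues i) 0 + lam * min (h.eigenvalues i) 0)
  else 0

/-- Pucci minimal operator `M⁻_{λ,Λ}`. -/
def pucciMinus {d : ℕ} (lam Lam : ℝ) (M : Mat d) : ℝ :=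
  if h : M.IsHermitian then
    ∑ i, (lam * max (h.eigenvalues i) 0 + Lam * min (h.eigenvalues i) 0)
  else 0

/-- Hessian matrix of a function at a point (via iterated directional derivatives). -/
def hessMat {d : ℕ} (φ : E d → ℝ) (x : E d) : Mat d :=
  Matrix.of fun i j =>
    fderiv ℝ (fun y => fderiv ℝ φ y (EuclideanSpace.single j (1:ℝ))) x
      (EuclideanSpace.single i (1:ℝ))

def OmegaPlus {d : ℕ} (u : E d → ℝ) (D : Set (E d)) : Set (E d) := {x ∈ D | 0 < u x}
def OmegaMinus {d : ℕ} (u : E d → ℝ) (D : Set (E d)) : Set (E d) := {x ∈ D | u x < 0}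
def Omega {d : ℕ} (u : E d → ℝ) (D : Set (E d)) : Set (E d) := OmegaPlus u D ∪ OmegaMinus u D
def freeBoundary {d : ℕ} (u : E d → ℝ) (D : Set (E d)) : Set (E d) :=
  (frontier (OmegaPlus u D) ∪ frontier (OmegaMinus u D)) ∩ D

/-- `u` is a `C^{1,1}` strong solution of the free transmission problem
`F₁(D²u)·χ_{u>0} + F₂(D²u)·χ_{u<0} = 1` on the open set `D`, with gradient `g`
and (a.e.-defined) Hessian `H`. -/
structure IsStrongSolutionOn {d : ℕ} (F₁ F₂ : Mat d → ℝ) (u : E d → ℝ)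
    (g : E d → E d) (H : E d → Mat d) (D : Set (E d)) : Prop where
  grad : ∀ x ∈ D, HasGradientAt u (g x) x
  lipGrad : ∀ x ∈ D, ∃ K : ℝ≥0, ∃ s ∈ 𝓝 x, LipschitzOnWith K g (s ∩ D)
  hessAE : ∀ᵐ x ∂(volume : Measure (E d)), x ∈ D →
    HasFDerivAt g (LinearMap.toContinuousLinearMap (Matrix.toEuclideanLin (H x))) x
  hessSymm : ∀ᵐ x ∂(volume : Measure (E d)), x ∈ D → (H x).IsSymm
  solPlus : ∀ᵐ x ∂(volume : Measure (E d)), x ∈ D → 0 < u x → F₁ (H x) = 1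
  solMinus : ∀ᵐ x ∂(volume : Measure (E d)), x ∈ D → u x < 0 → F₂ (H x) = 1

/-- Normalized volume of the negativity set in the ball `B_r(x)`. -/
def Vr {d : ℕ} (u : E d → ℝ) (D : Set (E d)) (x : E d) (r : ℝ) : ℝ :=
  (volume (ball x r ∩ OmegaMinus u D)).toReal / r ^ d

def supAbs {d : ℕ} (u : E d → ℝ) (s : Set (E d)) : ℝ :=
  sSup ((fun y => |u y|) '' s)

/-- The set of dyadic scales at which `|u|` does not decay too fast around `x`. -/
def MSet {d : ℕ} (u : E d → ℝ) (D : Set (E d)) (x : E d) : Set ℕ :=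
  {j | (1 / 16) * supAbs u (ball x ((1/2 : ℝ) ^ j) ∩ D) ≤
        supAbs u (ball x ((1/2 : ℝ) ^ (j + 1)) ∩ D)}

/-- Minimal width of a set: the smallest distance between two parallel hyperplanes
enclosing `A` (with value `0` for `A = ∅`). -/
def MD {d : ℕ} (A : Set (E d)) : ℝ :=
  sInf ((fun e : E d => sSup ((fun x => (inner ℝ e x : ℝ)) '' A) - sInf ((fun x => (inner ℝ e x : ℝ)) '' A)) ''
    {e : E d | ‖e‖ = 1})

/-- Thickness of the zero set of `u` in `B_r(x)`. -/
def deltaTh {d : ℕ} (u : E d → ℝ) (x : E d) (r : ℝ) : ℝ :=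
  MD {z ∈ ball x r | u z = 0} / r


/-- Supremum of `|u|` over a set, computed in the extended nonnegative reals. -/
def eSupAbs {d : ℕ} (u : E d → ℝ) (s : Set (E d)) : ℝ≥0∞ :=
  ⨆ x ∈ s, ENNReal.ofReal |u x|

/-- The set of dyadic scales at which `|u|` does not decay too fast around `x`. -/
def MSetE {d : ℕ} (u : E d → ℝ) (x : E d) : Set ℕ :=
  {j | ENNReal.ofReal (1 / 16) * eSupAbs u (ball x ((1/2 : ℝ) ^ j)) ≤
        eSupAbs u (ball x ((1/2 : ℝ) ^ (j + 1)))}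

/-! Induction on the scale `j`, with `a j = sup_{B_{2^{-j}}} |u|`. If `j ∈ M`, the hypothesis
`a j ≤ C 4^{-j} = 4C 4^{-(j+1)}` passes to the smaller ball. If `j ∉ M`, then `a (j+1) < a j / 16`,
and the factor `16` absorbs the factor `4` lost by the bound `4C 4^{-j}` from one scale to the next. -/

namespace ENNReal

lemma le_four_mul_inv_four_pow_of_antitone {a : ℕ → ℝ≥0∞} {c : ℝ≥0∞} (ha : Antitone a)
    (h0 : a 0 ≤ 4 * c) (hslow : ∀ j, 16⁻¹ * a j ≤ a (j + 1) → a j ≤ c * 4⁻¹ ^ j) (j : ℕ) :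
    a j ≤ 4 * c * 4⁻¹ ^ j := by
  have hfour : (4 : ℝ≥0∞) * 4⁻¹ = 1 := ENNReal.mul_inv_cancel (by norm_num) (by norm_num)
  have hsixteen : (16 : ℝ≥0∞)⁻¹ = 4⁻¹ * 4⁻¹ := by
    rw [← ENNReal.mul_inv (by norm_num) (by norm_num)]; norm_num
  induction j with
  | zero => simpa using h0
  | succ j ih =>
    have hbound : 4 * c * 4⁻¹ ^ (j + 1) = c * 4⁻¹ ^ j := by
      rw [pow_succ, mul_comm _ (4⁻¹ : ℝ≥0∞), ← mul_assoc, mul_assoc 4, mul_comm c, ← mul_assoc,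
        hfour, one_mul]
    rw [hbound]
    by_cases hj : 16⁻¹ * a j ≤ a (j + 1)
    · exact (ha j.le_succ).trans (hslow j hj)
    · calc a (j + 1) ≤ 16⁻¹ * a j := (not_le.mp hj).le
        _ ≤ 16⁻¹ * (4 * c * 4⁻¹ ^ j) := by gcongr
        _ = 4⁻¹ * (4 * 4⁻¹) * (c * 4⁻¹ ^ j) := by rw [hsixteen]; ring
        _ ≤ c * 4⁻¹ ^ j := by
          rw [hfour, mul_one]
          exact mul_le_of_le_one_left' (by norm_num)

end ENNReal

lemma eSupAbs_mono {d : ℕ} (u : E d → ℝ) {s t : Set (E d)} (hst : s ⊆ t) :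
    eSupAbs u s ≤ eSupAbs u t :=
  biSup_mono hst

lemma antitone_eSupAbs_ball_half_pow {d : ℕ} (u : E d → ℝ) (x : E d) :
    Antitone fun j : ℕ => eSupAbs u (ball x ((1/2 : ℝ) ^ j)) := fun _ _ hij =>
  eSupAbs_mono u (ball_subset_ball (pow_le_pow_of_le_one (by norm_num) (by norm_num) hij))

lemma ofReal_mul_sq_half_pow (C : ℝ) (j : ℕ) :
    ENNReal.ofReal (C * ((1/2 : ℝ) ^ j) ^ 2) = ENNReal.ofReal C * 4⁻¹ ^ j := by
  rw [ENNReal.ofReal_mul' (by positivity), ← pow_mul, pow_mul', ENNReal.ofReal_pow (by norm_num)]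
  congr 2
  rw [show ((1 : ℝ) / 2) ^ 2 = 4⁻¹ by norm_num, ENNReal.ofReal_inv_of_pos (by norm_num)]
  norm_num

theorem quadratic_growth_all_scales_general {d : ℕ} (u : E d → ℝ) (xs : E d) (C : ℝ)
    (hball : eSupAbs u (ball xs 1) ≤ ENNReal.ofReal (4 * C))
    (hM : ∀ j ∈ MSetE u xs,
      eSupAbs u (ball xs ((1/2 : ℝ) ^ j)) ≤ ENNReal.ofReal (C * ((1/2 : ℝ) ^ j) ^ 2)) :
    ∀ j : ℕ,
      eSupAbs u (ball xs ((1/2 : ℝ) ^ j)) ≤ ENNReal.ofReal (4 * C * ((1/2 : ℝ) ^ j) ^ 2) := by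
  have hfour : ENNReal.ofReal (4 * C) = 4 * ENNReal.ofReal C := by
    rw [ENNReal.ofReal_mul (by norm_num)]; norm_num
  intro j
  rw [ofReal_mul_sq_half_pow, hfour]
  refine ENNReal.le_four_mul_inv_four_pow_of_antitone (antitone_eSupAbs_ball_half_pow u xs)
    (by rw [← hfour]; simpa using hball) (fun j hj => ?_) j
  rw [← ofReal_mul_sq_half_pow]
  have hsixteen : ENNReal.ofReal (1 / 16) = 16⁻¹ := by
    rw [one_div, ENNReal.ofReal_inv_of_pos (by norm_num)]; norm_num
  exact hM j (by rwa [MSetE, mem_ofPred_eq, hsixteen])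

/-- from quadratic decay along the scales in `M(x*,u)` to quadratic decay
along all dyadic scales. -/
theorem quadratic_growth_all_scales {d : ℕ} (u : E d → ℝ) (xs : E d) (C : ℝ) (hC : 0 < C)
    (hbdd : ∃ M : ℝ, ∀ x : E d, |u x| ≤ M)
    (hball : eSupAbs u (ball xs 1) ≤ ENNReal.ofReal (4 * C))
    (hM : ∀ j ∈ MSetE u xs,
      eSupAbs u (ball xs ((1/2 : ℝ) ^ j)) ≤ ENNReal.ofReal (C * ((1/2 : ℝ) ^ j) ^ 2)) :
    ∀ j : ℕ,
      eSupAbs u (ball xs ((1/2 : ℝ) ^ j)) ≤ ENNReal.ofReal (4 * C * ((1/2 : ℝ) ^ j) ^ 2) :=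
  quadratic_growth_all_scales_general u xs C hball hM
end
end

section
/- Let F₁, F₂ : S(d) → ℝ be (λ,Λ)-uniformly elliptic and let u be a C^{1,1} strong solution of the free transmission problem on B₁. Then the set {x ∈ B₁ : Du(x) ≠ 0} is dense in Ω(u); that is, Ω(u) is contained in the closure of {x ∈ B₁ : Du(x) ≠ 0}. -/
open Metric MeasureTheory Set Filter
open scoped Topology RealInnerProductSpace ENNReal NNReal

noncomputable section

/- If `Du` vanished on an open subset of `Ω⁺(u)` (or `Ω⁻(u)`), then so would the a.e. Hessian
`D²u` there, and the equation would read `F(0) = 1` on a set of positive measure, contradicting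
`F(0) = 0`. Nearby points of `Ω(u)` are in `Ω(u)` because `u` is continuous. -/

variable {d : ℕ} {g : E d → E d} {H : E d → Mat d}

lemma eq_zero_of_hasFDerivAt_toEuclideanLin {A : Mat d} {y : E d}
    (hA : HasFDerivAt g (LinearMap.toContinuousLinearMap (Matrix.toEuclideanLin A)) y)
    (hg : g =ᶠ[𝓝 y] 0) : A = 0 := by
  simpa using hA.unique ((hasFDerivAt_const (0 : E d) y).congr_of_eventuallyEq hg)

lemma exists_ne_zero_of_ae_eq_one {F : Mat d → ℝ} (hF0 : F 0 = 0) {U : Set (E d)}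
    (hU : IsOpen U) (hU₀ : U.Nonempty)
    (hH : ∀ᵐ y ∂volume, y ∈ U →
      HasFDerivAt g (LinearMap.toContinuousLinearMap (Matrix.toEuclideanLin (H y))) y)
    (hsol : ∀ᵐ y ∂volume, y ∈ U → F (H y) = 1) : ∃ y ∈ U, g y ≠ 0 := by
  by_contra! hg
  have : (ae (volume.restrict U)).NeBot :=
    ae_restrict_neBot.mpr (hU.measure_pos volume hU₀).ne'
  obtain ⟨y, hyU, hHy, hFy⟩ := ((ae_restrict_mem hU.measurableSet).and
    (((ae_restrict_iff' hU.measurableSet).mpr hH).and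
      ((ae_restrict_iff' hU.measurableSet).mpr hsol))).exists
  have hg_nhds : g =ᶠ[𝓝 y] 0 := eventually_of_mem (hU.mem_nhds hyU) hg
  rw [eq_zero_of_hasFDerivAt_toEuclideanLin hHy hg_nhds, hF0] at hFy
  exact zero_ne_one hFy

lemma mem_closure_setOf_ne_zero_of_ae_eq_one {F : Mat d → ℝ} (hF0 : F 0 = 0)
    {D s : Set (E d)} {x : E d} (hs : s ∈ 𝓝 x) (hsD : s ⊆ D)
    (hH : ∀ᵐ y ∂volume, y ∈ D →
      HasFDerivAt g (LinearMap.toContinuousLinearMap (Matrix.toEuclideanLin (H y))) y)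
    (hsol : ∀ᵐ y ∂volume, y ∈ s → F (H y) = 1) : x ∈ closure {y ∈ D | g y ≠ 0} := by
  refine mem_closure_iff_nhds.mpr fun t ht => ?_
  have hsub : interior (t ∩ s) ⊆ s := interior_subset.trans inter_subset_right
  obtain ⟨y, hy, hgy⟩ := exists_ne_zero_of_ae_eq_one hF0 isOpen_interior
    ⟨x, mem_interior_iff_mem_nhds.mpr (inter_mem ht hs)⟩
    (hH.mono fun y h hy => h (hsD (hsub hy))) (hsol.mono fun y h hy => h (hsub hy))
  exact ⟨y, (interior_subset hy).1, hsD (hsub hy), hgy⟩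

theorem gradient_nonzero_dense_general {d : ℕ} {lam Lam : ℝ}
    (F₁ F₂ : Mat d → ℝ)
    (hF₁ : UniformlyElliptic lam Lam F₁) (hF₂ : UniformlyElliptic lam Lam F₂)
    (u : E d → ℝ) (g : E d → E d) (H : E d → Mat d)
    (hu : IsStrongSolutionOn F₁ F₂ u g H (ball (0 : E d) 1)) :
    Omega u (ball (0 : E d) 1) ⊆ closure {x ∈ ball (0 : E d) 1 | g x ≠ 0} := by
  have hcont {x} (hx : x ∈ ball (0 : E d) 1) : ContinuousAt u x :=
    (hu.grad x hx).hasFDerivAt.continuousAt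
  rintro x (⟨hx, hpos⟩ | ⟨hx, hneg⟩)
  · exact mem_closure_setOf_ne_zero_of_ae_eq_one hF₁.1
      (inter_mem (isOpen_ball.mem_nhds hx) ((hcont hx).preimage_mem_nhds (Ioi_mem_nhds hpos)))
      (sep_subset _ _) hu.hessAE (hu.solPlus.mono fun y h hy => h hy.1 hy.2)
  · exact mem_closure_setOf_ne_zero_of_ae_eq_one hF₂.1
      (inter_mem (isOpen_ball.mem_nhds hx) ((hcont hx).preimage_mem_nhds (Iio_mem_nhds hneg)))
      (sep_subset _ _) hu.hessAE (hu.solMinus.mono fun y h hy => h hy.1 hy.2)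

/-- the set where the gradient does not vanish is dense in `Ω(u)`. -/
theorem gradient_nonzero_dense {d : ℕ} (hd : 1 ≤ d) {lam Lam : ℝ}
    (hlam : 0 < lam) (hlL : lam ≤ Lam) (F₁ F₂ : Mat d → ℝ)
    (hF₁ : UniformlyElliptic lam Lam F₁) (hF₂ : UniformlyElliptic lam Lam F₂)
    (u : E d → ℝ) (g : E d → E d) (H : E d → Mat d)
    (hu : IsStrongSolutionOn F₁ F₂ u g H (ball (0 : E d) 1)) :
    Omega u (ball (0 : E d) 1) ⊆ closure {x ∈ ball (0 : E d) 1 | g x ≠ 0} :=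
  gradient_nonzero_dense_general F₁ F₂ hF₁ hF₂ u g H hu
end
end

section
/- There exist constants C₀ > 0 and C > 0, depending only on d, λ, Λ, such that the following holds. Let F₁, F₂ : S(d) → ℝ be (λ,Λ)-uniformly elliptic, convex, and positively homogeneous of degree one; let u be a C^{1,1} strong solution of the free transmission problem on B₁ with sup_{B₁}|u| ≤ 1; suppose V_r(x*,u) ≤ C₀ for every x* ∈ ∂Ω(u) and every r ∈ (0, 1/2), and suppose {x ∈ B₁ : Du(x) ≠ 0} ⊆ Ω(u). Then for every x* ∈ ∂Ω(u) ∩ B_{1/2} and every r ∈ (0, 1/2), one has sup_{x ∈ ∂B_r(x*)} u(x) ≥ C·r². -/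
open Metric MeasureTheory Set Filter
open scoped Topology RealInnerProductSpace ENNReal NNReal

noncomputable section

/-!
Fix `c = 1/(4Λ)` and suppose `u < c r²/2` on `∂B_r(x*)`. For `y` close to `x*`, the function
`u - c|· - y|²` is larger at `x*` than anywhere on the sphere, so it has an interior maximum `x`.
There `Du(x) = 2c(x - y)` and, wherever `D²u(x)` exists, `D²u(x) ≤ 2c I`, so `Fᵢ(D²u(x)) ≤ 1/2`:
the equation forces `u(x) = 0`, hence `Du(x) = 0` and `x = y`. Thus every `y` near `x*` with
`u(y) ≠ 0` equals `x - Du(x)/(2c)` for some `x` where `D²u` fails to exist; this is the image of a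
null set under a locally Lipschitz map, hence null. But `{u ≠ 0}` is open and accumulates at `x*`.
-/

theorem exists_isLocalMax_sub_mul_norm_sub_sq {V : Type*} [NormedAddCommGroup V] [ProperSpace V]
    {u : V → ℝ} {x₀ y : V} {r c : ℝ}
    (hu : ContinuousOn u (closedBall x₀ r)) (hx₀ : 0 ≤ u x₀) (hc : 0 < c)
    (hsphere : ∀ z ∈ sphere x₀ r, u z < c / 2 * r ^ 2) (hy : y ∈ ball x₀ (r / 4)) :
    ∃ x ∈ ball x₀ r, IsLocalMax (fun z => u z - c * ‖z - y‖ ^ 2) x := by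
  have hr : 0 < r := by linarith [dist_nonneg.trans_lt (mem_ball.1 hy)]
  refine (isCompact_closedBall x₀ r).exists_isLocalMax_mem_open ball_subset_closedBall
    (hu.sub (by fun_prop)) (mem_closedBall_self hr.le) (fun z hz => ?_) isOpen_ball
  have hz : dist z x₀ = r := le_antisymm hz.1 (not_lt.1 hz.2)
  have hy' : ‖x₀ - y‖ < r / 4 := by rw [← dist_eq_norm, dist_comm]; exact hy
  have hzy : 3 * r / 4 ≤ ‖z - y‖ := by
    have := norm_sub_norm_le (z - x₀) (y - x₀)
    rw [← dist_eq_norm, hz, sub_sub_sub_cancel_right, norm_sub_rev y] at this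
    linarith
  have h₁ : ‖x₀ - y‖ ^ 2 < (r / 4) ^ 2 := by gcongr
  have h₂ : (3 * r / 4) ^ 2 ≤ ‖z - y‖ ^ 2 := by gcongr
  nlinarith [hsphere z (mem_sphere.2 hz), mul_lt_mul_of_pos_left h₁ hc,
    mul_le_mul_of_nonneg_left h₂ hc.le]

section Analysis

variable {V : Type*} [NormedAddCommGroup V] [InnerProductSpace ℝ V]

theorem LipschitzOnWith.volume_image_null [FiniteDimensional ℝ V] [MeasurableSpace V]
    [BorelSpace V] {K : ℝ≥0} {f : V → V} {s : Set V} (hf : LipschitzOnWith K f s)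
    (hs : volume s = 0) : volume (f '' s) = 0 := by
  rw [← InnerProductSpace.euclideanHausdorffMeasure_eq_volume,
    Measure.euclideanHausdorffMeasure_def] at hs ⊢
  simp only [Measure.smul_apply, ENNReal.smul_def, smul_eq_mul, mul_eq_zero] at hs ⊢
  refine hs.imp_right fun hs => ?_
  simpa [hs] using hf.hausdorffMeasure_image_le (Nat.cast_nonneg (Module.finrank ℝ V))

theorem LocallyLipschitzOn.volume_image_null [FiniteDimensional ℝ V] [MeasurableSpace V]
    [BorelSpace V] {f : V → V} {s : Set V} (hf : LocallyLipschitzOn s f) (hs : volume s = 0) :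
    volume (f '' s) = 0 := by
  choose! K t ht hK using fun x (hx : x ∈ s) => hf hx
  obtain ⟨c, hcs, hc, hcover⟩ := TopologicalSpace.countable_cover_nhdsWithin ht
  have hs_eq : s = ⋃ x ∈ c, t x ∩ s := by rw [← iUnion₂_inter, inter_eq_right.2 hcover]
  rw [hs_eq, image_iUnion₂]
  exact (measure_biUnion_null_iff hc).2 fun x hx =>
    ((hK x (hcs hx)).mono inter_subset_left).volume_image_null
      (measure_mono_null inter_subset_right hs)

theorem LocallyLipschitzOn.const_smul {s : Set V} {f : V → V} (hf : LocallyLipschitzOn s f)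
    (a : ℝ) : LocallyLipschitzOn s (fun x => a • f x) := fun x hx => by
  obtain ⟨K, t, ht, hK⟩ := hf hx
  exact ⟨‖a‖₊ * K, t, ht, (lipschitzWith_smul a).comp_lipschitzOnWith hK⟩

theorem IsLocalMax.le_zero_of_hasDerivAt_deriv {ψ ψ' : ℝ → ℝ} {a s : ℝ} (hmax : IsLocalMax ψ a)
    (hψ : ∀ᶠ t in 𝓝 a, HasDerivAt ψ (ψ' t) t) (hψ' : HasDerivAt ψ' s a) : s ≤ 0 := by
  by_contra! hs
  have hderiv : deriv ψ =ᶠ[𝓝 a] ψ' := hψ.mono fun t ht => ht.deriv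
  have hmin : IsLocalMin ψ a :=
    isLocalMin_of_deriv_deriv_pos (by rwa [hderiv.deriv_eq, hψ'.deriv])
      (by rw [hderiv.eq_of_nhds]; exact hmax.hasDerivAt_eq_zero hψ.self_of_nhds)
      hψ.self_of_nhds.continuousAt
  have hconst : ψ =ᶠ[𝓝 a] fun _ => ψ a := (hmin.and hmax).mono fun t ht => le_antisymm ht.2 ht.1
  have hψ'_zero : ψ' =ᶠ[𝓝 a] fun _ => 0 := by
    filter_upwards [hψ, hconst.eventuallyEq_nhds] with t ht hct
    exact ht.unique ((hasDerivAt_const t (ψ a)).congr_of_eventuallyEq hct)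
  exact hs.ne' (hψ'.unique ((hasDerivAt_const a 0).congr_of_eventuallyEq hψ'_zero))

variable [CompleteSpace V]

theorem IsLocalMax.gradient_eq_zero {f : V → ℝ} {f' x : V} (hmax : IsLocalMax f x)
    (hf : HasGradientAt f f' x) : f' = 0 := by
  simpa using hmax.hasFDerivAt_eq_zero (hasGradientAt_iff_hasFDerivAt.1 hf)

theorem IsLocalMax.inner_apply_self_nonpos {f : V → ℝ} {G : V → V} {A : V →L[ℝ] V} {x : V}
    (hmax : IsLocalMax f x) (hf : ∀ᶠ y in 𝓝 x, HasGradientAt f (G y) y)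
    (hG : HasFDerivAt G A x) (v : V) : ⟪A v, v⟫ ≤ 0 := by
  have hℓ : ∀ t : ℝ, HasDerivAt (fun t : ℝ => x + t • v) v t := fun t => by
    simpa using ((hasDerivAt_id t).smul_const v).const_add x
  have hℓx : Tendsto (fun t : ℝ => x + t • v) (𝓝 0) (𝓝 (x + (0 : ℝ) • v)) :=
    (hℓ 0).continuousAt.tendsto
  rw [zero_smul, add_zero] at hℓx
  refine (IsLocalMax.comp_continuous (g := fun t : ℝ => x + t • v) (b := 0) (by simpa using hmax)
    (hℓ 0).continuousAt).le_zero_of_hasDerivAt_deriv (ψ' := fun t => ⟪v, G (x + t • v)⟫) ?_ ?_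
  · filter_upwards [hℓx.eventually hf] with t ht
    simpa [InnerProductSpace.toDual_apply_apply, real_inner_comm v] using
      ht.hasFDerivAt.comp_hasDerivAt t (hℓ t)
  · rw [real_inner_comm]
    exact (innerSL ℝ v).hasFDerivAt.comp_hasDerivAt 0
      ((by simpa using hG : HasFDerivAt G A (x + (0 : ℝ) • v)).comp_hasDerivAt 0 (hℓ 0))

theorem HasGradientAt.sub_mul_norm_sub_sq {u : V → ℝ} {g' y z : V} (c : ℝ)
    (hu : HasGradientAt u g' z) :
    HasGradientAt (fun w => u w - c * ‖w - y‖ ^ 2) (g' - (2 * c) • (z - y)) z := by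
  rw [hasGradientAt_iff_hasFDerivAt] at hu ⊢
  refine (hu.sub (((hasFDerivAt_id z).sub_const y : HasFDerivAt (· - y) _ z).norm_sq.const_mul
    c)).congr_fderiv ?_
  ext v
  simp
  ring

theorem IsLocalMax.gradient_eq_of_sub_mul_norm_sub_sq {u : V → ℝ} {g' x y : V} {c : ℝ}
    (hmax : IsLocalMax (fun z => u z - c * ‖z - y‖ ^ 2) x) (hu : HasGradientAt u g' x) :
    g' = (2 * c) • (x - y) :=
  sub_eq_zero.1 (hmax.gradient_eq_zero (hu.sub_mul_norm_sub_sq c))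

end Analysis

theorem matOpNorm_smul_one_le {d : ℕ} (a : ℝ) : matOpNorm (a • (1 : Mat d)) ≤ |a| :=
  ContinuousLinearMap.opNorm_le_bound _ (abs_nonneg a) fun v => by simp [norm_smul]

theorem UniformlyElliptic.le_of_inner_le {d : ℕ} {lam Lam a : ℝ} {F : Mat d → ℝ}
    (hF : UniformlyElliptic lam Lam F) (hlam : 0 ≤ lam) (hLam : 0 ≤ Lam) (ha : 0 ≤ a)
    {M : Mat d} (hM : M.IsSymm) (hMa : ∀ v : E d, ⟪M.toEuclideanLin v, v⟫ ≤ a * ‖v‖ ^ 2) :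
    F M ≤ Lam * a := by
  have haI : (a • (1 : Mat d)).PosSemidef := Matrix.PosSemidef.one.smul ha
  have haI_symm : (a • (1 : Mat d)).IsSymm := by simp [Matrix.IsSymm]
  have hN : (a • 1 - M).PosSemidef := by
    rw [← Matrix.isPositive_toEuclideanLin_iff]
    refine ⟨Matrix.isSymmetric_toEuclideanLin_iff.2 ?_, fun v => ?_⟩
    · exact Matrix.isHermitian_iff_isSymm.2 (haI_symm.sub hM)
    · simpa [inner_sub_left, real_inner_smul_left] using hMa v
  have hlower := (hF.2 M (a • 1 - M) hM (haI_symm.sub hM) hN).1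
  have hupper := (hF.2 0 (a • 1) (by simp [Matrix.IsSymm]) haI_symm haI).2
  rw [add_sub_cancel] at hlower
  rw [zero_add, hF.1, sub_zero] at hupper
  calc F M ≤ F (a • 1) := by
        linarith [(mul_nonneg hlam (norm_nonneg _) : 0 ≤ lam * matOpNorm (a • 1 - M))]
    _ ≤ Lam * matOpNorm (a • 1) := hupper
    _ ≤ Lam * a := by
        gcongr
        exact (matOpNorm_smul_one_le a).trans (abs_of_nonneg ha).le

theorem eq_zero_of_mem_freeBoundary {d : ℕ} {u : E d → ℝ} {D : Set (E d)} {x : E d}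
    (hD : IsOpen D) (hu : ContinuousOn u D) (hx : x ∈ freeBoundary u D) : u x = 0 := by
  obtain ⟨hfr, hxD⟩ := hx
  have hpos_open : IsOpen (OmegaPlus u D) := hu.isOpen_inter_preimage hD isOpen_Ioi
  have hneg_open : IsOpen (OmegaMinus u D) := hu.isOpen_inter_preimage hD isOpen_Iio
  have hdisj : Disjoint (OmegaPlus u D) (OmegaMinus u D) :=
    disjoint_left.2 fun y h₁ h₂ => lt_asymm h₁.2 h₂.2
  rcases hfr with h | h
  · rw [hpos_open.frontier_eq] at h
    refine le_antisymm (not_lt.1 fun hpos => h.2 ⟨hxD, hpos⟩) (not_lt.1 fun hneg => ?_)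
    exact disjoint_left.1 (hdisj.closure_left hneg_open) h.1 ⟨hxD, hneg⟩
  · rw [hneg_open.frontier_eq] at h
    refine le_antisymm (not_lt.1 fun hpos => ?_) (not_lt.1 fun hneg => h.2 ⟨hxD, hneg⟩)
    exact disjoint_left.1 (hdisj.symm.closure_left hpos_open) h.1 ⟨hxD, hpos⟩

section StrongSolution

variable {d : ℕ} {F₁ F₂ : Mat d → ℝ} {u : E d → ℝ} {g : E d → E d} {H : E d → Mat d}
  {D : Set (E d)} {lam Lam c : ℝ}

def IsStrongSolutionAt (F₁ F₂ : Mat d → ℝ) (u : E d → ℝ) (g : E d → E d) (H : E d → Mat d)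
    (x : E d) : Prop :=
  (H x).IsSymm ∧
    HasFDerivAt g (LinearMap.toContinuousLinearMap (Matrix.toEuclideanLin (H x))) x ∧
    (0 < u x → F₁ (H x) = 1) ∧ (u x < 0 → F₂ (H x) = 1)

theorem IsStrongSolutionOn.volume_not_isStrongSolutionAt
    (hsol : IsStrongSolutionOn F₁ F₂ u g H D) :
    volume {x ∈ D | ¬ IsStrongSolutionAt F₁ F₂ u g H x} = 0 := by
  have hae : ∀ᵐ x ∂volume, x ∈ D → IsStrongSolutionAt F₁ F₂ u g H x := by
    filter_upwards [hsol.hessSymm, hsol.hessAE, hsol.solPlus, hsol.solMinus]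
      with x h₁ h₂ h₃ h₄ hx
    exact ⟨h₁ hx, h₂ hx, h₃ hx, h₄ hx⟩
  simpa [ae_iff] using hae

theorem IsStrongSolutionOn.continuousOn (hsol : IsStrongSolutionOn F₁ F₂ u g H D) :
    ContinuousOn u D :=
  fun x hx => (hsol.grad x hx).differentiableAt.continuousAt.continuousWithinAt

theorem IsStrongSolutionOn.locallyLipschitzOn_grad (hsol : IsStrongSolutionOn F₁ F₂ u g H D) :
    LocallyLipschitzOn D g := fun x hx => by
  obtain ⟨K, s, hs, hK⟩ := hsol.lipGrad x hx
  exact ⟨K, s ∩ D, inter_mem (mem_nhdsWithin_of_mem_nhds hs) self_mem_nhdsWithin, hK⟩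

theorem IsStrongSolutionAt.eq_zero_of_isLocalMax {x y : E d}
    (hx : IsStrongSolutionAt F₁ F₂ u g H x)
    (hF₁ : UniformlyElliptic lam Lam F₁) (hF₂ : UniformlyElliptic lam Lam F₂)
    (hlam : 0 ≤ lam) (hLam : 0 ≤ Lam) (hc : 0 < c) (hcLam : 2 * c * Lam < 1)
    (hu : ∀ᶠ z in 𝓝 x, HasGradientAt u (g z) z) (hg : g x ≠ 0 → u x ≠ 0)
    (hmax : IsLocalMax (fun z => u z - c * ‖z - y‖ ^ 2) x) : u y = 0 := by
  obtain ⟨hsymm, hH, h₁, h₂⟩ := hx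
  have hfirst := hmax.gradient_eq_of_sub_mul_norm_sub_sq hu.self_of_nhds
  have hsecond (v : E d) : ⟪(H x).toEuclideanLin v, v⟫ ≤ 2 * c * ‖v‖ ^ 2 := by
    have := hmax.inner_apply_self_nonpos (hu.mono fun z hz => hz.sub_mul_norm_sub_sq c)
      (hH.sub (((hasFDerivAt_id x).sub_const y).const_smul (2 * c))) v
    simp [inner_sub_left, real_inner_smul_left] at this
    linarith
  have hF_lt {F : Mat d → ℝ} (hF : UniformlyElliptic lam Lam F) : F (H x) < 1 := by
    have := hF.le_of_inner_le hlam hLam (by positivity) hsymm hsecond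
    linarith
  have hux : u x = 0 := by
    rcases lt_trichotomy (u x) 0 with hneg | hzero | hpos
    · exact absurd (h₂ hneg) (hF_lt hF₂).ne
    · exact hzero
    · exact absurd (h₁ hpos) (hF_lt hF₁).ne
  have hgx : g x = 0 := not_imp_comm.1 hg (not_not.2 hux)
  rw [hgx, eq_comm, smul_eq_zero, sub_eq_zero] at hfirst
  rcases hfirst with h | rfl
  · linarith
  · exact hux

theorem IsStrongSolutionOn.subset_image_not_isStrongSolutionAt
    (hD : IsOpen D) (hsol : IsStrongSolutionOn F₁ F₂ u g H D)
    (hF₁ : UniformlyElliptic lam Lam F₁) (hF₂ : UniformlyElliptic lam Lam F₂)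
    (hlam : 0 ≤ lam) (hLam : 0 ≤ Lam) (hc : 0 < c) (hcLam : 2 * c * Lam < 1)
    (hgrad : {x ∈ D | g x ≠ 0} ⊆ Omega u D) {x₀ : E d} {r : ℝ} (hx₀ : 0 ≤ u x₀)
    (hrD : closedBall x₀ r ⊆ D) (hsphere : ∀ z ∈ sphere x₀ r, u z < c / 2 * r ^ 2) :
    {y ∈ ball x₀ (r / 4) | u y ≠ 0} ⊆
      (fun x => x - (2 * c)⁻¹ • g x) '' {x ∈ D | ¬ IsStrongSolutionAt F₁ F₂ u g H x} := by
  rintro y ⟨hy, huy⟩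
  obtain ⟨x, hx, hmax⟩ := exists_isLocalMax_sub_mul_norm_sub_sq
    (hsol.continuousOn.mono hrD) hx₀ hc hsphere hy
  have hxD : x ∈ D := hrD (ball_subset_closedBall hx)
  have hu : ∀ᶠ z in 𝓝 x, HasGradientAt u (g z) z :=
    eventually_of_mem (hD.mem_nhds hxD) hsol.grad
  have hg : g x ≠ 0 → u x ≠ 0 := fun hgx => by
    rcases hgrad ⟨hxD, hgx⟩ with h | h
    exacts [h.2.ne', h.2.ne]
  refine ⟨x, ⟨hxD, fun hgood => huy ?_⟩, ?_⟩
  · exact hgood.eq_zero_of_isLocalMax hF₁ hF₂ hlam hLam hc hcLam hu hg hmax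
  · dsimp only
    rw [hmax.gradient_eq_of_sub_mul_norm_sub_sq hu.self_of_nhds, smul_smul,
      inv_mul_cancel₀ (by positivity), one_smul, sub_sub_cancel]

theorem IsStrongSolutionOn.le_sSup_sphere
    (hD : IsOpen D) (hsol : IsStrongSolutionOn F₁ F₂ u g H D)
    (hF₁ : UniformlyElliptic lam Lam F₁) (hF₂ : UniformlyElliptic lam Lam F₂)
    (hlam : 0 ≤ lam) (hLam : 0 < Lam) (hgrad : {x ∈ D | g x ≠ 0} ⊆ Omega u D)
    {x₀ : E d} (hx₀ : x₀ ∈ freeBoundary u D) {r : ℝ} (hr : 0 < r) (hrD : closedBall x₀ r ⊆ D) :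
    1 / (8 * Lam) * r ^ 2 ≤ sSup (u '' sphere x₀ r) := by
  by_contra! hsup
  have hsphere : ∀ z ∈ sphere x₀ r, u z < 1 / (4 * Lam) / 2 * r ^ 2 := fun z hz => by
    have hbdd : BddAbove (u '' sphere x₀ r) := ((isCompact_sphere x₀ r).image_of_continuousOn
      (hsol.continuousOn.mono (sphere_subset_closedBall.trans hrD))).bddAbove
    calc u z ≤ sSup (u '' sphere x₀ r) := le_csSup hbdd (mem_image_of_mem u hz)
      _ < 1 / (8 * Lam) * r ^ 2 := hsup
      _ = 1 / (4 * Lam) / 2 * r ^ 2 := by ring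
  have hnull : volume {y ∈ ball x₀ (r / 4) | u y ≠ 0} = 0 :=
    measure_mono_null (hsol.subset_image_not_isStrongSolutionAt hD hF₁ hF₂ hlam hLam.le
      (by positivity) (by field_simp; norm_num) hgrad
      (eq_zero_of_mem_freeBoundary hD hsol.continuousOn hx₀).ge hrD hsphere)
      ((LipschitzWith.id.locallyLipschitz.locallyLipschitzOn.sub
        (hsol.locallyLipschitzOn_grad.const_smul _)).mono (sep_subset _ _) |>.volume_image_null
        hsol.volume_not_isStrongSolutionAt)
  have hclosure : x₀ ∈ closure (Omega u D) := by
    rcases hx₀.1 with h | h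
    exacts [closure_mono subset_union_left (frontier_subset_closure h),
      closure_mono subset_union_right (frontier_subset_closure h)]
  have hopen : IsOpen (Omega u D ∩ ball x₀ (r / 4)) :=
    ((hsol.continuousOn.isOpen_inter_preimage hD isOpen_Ioi).union
      (hsol.continuousOn.isOpen_inter_preimage hD isOpen_Iio)).inter isOpen_ball
  have hne : (Omega u D ∩ ball x₀ (r / 4)).Nonempty :=
    inter_comm (ball x₀ (r / 4)) _ ▸
      mem_closure_iff.1 hclosure _ isOpen_ball (mem_ball_self (by positivity))
  refine (hopen.measure_pos volume hne).ne' (measure_mono_null ?_ hnull)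
  rintro y ⟨hy | hy, hyr⟩
  exacts [⟨hyr, hy.2.ne'⟩, ⟨hyr, hy.2.ne⟩]

end StrongSolution

theorem nondegeneracy_general {d : ℕ} {lam Lam : ℝ}
    (hlam : 0 < lam) (hlL : lam ≤ Lam) :
    ∃ C₀ : ℝ, 0 < C₀ ∧ ∃ C : ℝ, 0 < C ∧
      ∀ F₁ F₂ : Mat d → ℝ,
        UniformlyElliptic lam Lam F₁ → UniformlyElliptic lam Lam F₂ →
        ConvexOn ℝ Set.univ F₁ → ConvexOn ℝ Set.univ F₂ →
        PosHomOne F₁ → PosHomOne F₂ →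
        ∀ (u : E d → ℝ) (g : E d → E d) (H : E d → Mat d),
          IsStrongSolutionOn F₁ F₂ u g H (ball (0 : E d) 1) →
          (∀ x ∈ ball (0 : E d) 1, |u x| ≤ 1) →
          (∀ xs ∈ freeBoundary u (ball (0 : E d) 1), ∀ r ∈ Set.Ioo (0 : ℝ) (1/2),
            Vr u (ball (0 : E d) 1) xs r ≤ C₀) →
          {x ∈ ball (0 : E d) 1 | g x ≠ 0} ⊆ Omega u (ball (0 : E d) 1) →
          ∀ xs ∈ freeBoundary u (ball (0 : E d) 1) ∩ ball (0 : E d) (1/2),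
            ∀ r ∈ Set.Ioo (0 : ℝ) (1/2),
              C * r ^ 2 ≤ sSup (u '' sphere xs r) := by
  have hLam : 0 < Lam := hlam.trans_le hlL
  refine ⟨1, one_pos, 1 / (8 * Lam), by positivity, ?_⟩
  intro F₁ F₂ hF₁ hF₂ _ _ _ _ u g H hsol _ _ hgrad xs ⟨hxs, hxs_half⟩ r ⟨hr, hr_half⟩
  refine hsol.le_sSup_sphere isOpen_ball hF₁ hF₂ hlam.le hLam hgrad hxs hr
    (closedBall_subset_ball' ?_)
  rw [mem_ball] at hxs_half
  linarith

/-- non-degeneracy of the free boundary: on spheres around free boundary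
points, the supremum of `u` grows at least quadratically. -/
theorem nondegeneracy {d : ℕ} (hd : 1 ≤ d) {lam Lam : ℝ}
    (hlam : 0 < lam) (hlL : lam ≤ Lam) :
    ∃ C₀ : ℝ, 0 < C₀ ∧ ∃ C : ℝ, 0 < C ∧
      ∀ F₁ F₂ : Mat d → ℝ,
        UniformlyElliptic lam Lam F₁ → UniformlyElliptic lam Lam F₂ →
        ConvexOn ℝ Set.univ F₁ → ConvexOn ℝ Set.univ F₂ →
        PosHomOne F₁ → PosHomOne F₂ →
        ∀ (u : E d → ℝ) (g : E d → E d) (H : E d → Mat d),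
          IsStrongSolutionOn F₁ F₂ u g H (ball (0 : E d) 1) →
          (∀ x ∈ ball (0 : E d) 1, |u x| ≤ 1) →
          (∀ xs ∈ freeBoundary u (ball (0 : E d) 1), ∀ r ∈ Set.Ioo (0 : ℝ) (1/2),
            Vr u (ball (0 : E d) 1) xs r ≤ C₀) →
          {x ∈ ball (0 : E d) 1 | g x ≠ 0} ⊆ Omega u (ball (0 : E d) 1) →
          ∀ xs ∈ freeBoundary u (ball (0 : E d) 1) ∩ ball (0 : E d) (1/2),
            ∀ r ∈ Set.Ioo (0 : ℝ) (1/2),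
              C * r ^ 2 ≤ sSup (u '' sphere xs r) :=
  nondegeneracy_general hlam hlL
end
end
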